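/- arXiv:2605.22735 — 2 statements merged into one kernel-verified Lean document; each statement's English description precedes it below -/
import Mathlib

section
/- Let T be a finite-order element of GL_n(ℤ) with n ≤ 6. Then the order of T is at most 30. -/
/-!
Over `ℚ` the minimal polynomial of `T` divides `X ^ k - 1 = ∏_{d ∣ k} Φ_d`, hence divides the
product of those `Φ_d` that divide the characteristic polynomial. These are distinct irreducible
factors of the characteristic polynomial, so `∑ φ(d) ≤ n ≤ 6`, and the order of `T` divides the
lcm of these `d`. Every `d` with `φ(d) ≤ 6` divides `2520`, and a finite check over the possible
sets of such `d` bounds their lcm by `30`.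
-/

open Polynomial Nat

theorem Finset.lcm_id_pos {D : Finset ℕ} (hD : 0 ∉ D) : 0 < D.lcm id :=
  Nat.pos_of_ne_zero <| Finset.lcm_ne_zero_iff.2 fun _ hd ↦ ne_of_mem_of_not_mem hd hD

namespace Polynomial

theorem prod_cyclotomic_rat_dvd {D : Finset ℕ} {q : ℚ[X]} (h : ∀ d ∈ D, cyclotomic d ℚ ∣ q) :
    ∏ d ∈ D, cyclotomic d ℚ ∣ q :=
  Finset.prod_dvd_of_coprime (fun _ _ _ _ hne ↦ cyclotomic.isCoprime_rat hne) h

theorem prod_cyclotomic_rat_dvd_X_pow_sub_one {D : Finset ℕ} (hD : 0 ∉ D) :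
    ∏ d ∈ D, cyclotomic d ℚ ∣ X ^ D.lcm id - 1 := by
  rw [← prod_cyclotomic_eq_X_pow_sub_one (Finset.lcm_id_pos hD)]
  exact prod_cyclotomic_rat_dvd fun d hd ↦ Finset.dvd_prod_of_mem _ <|
    Nat.mem_divisors.2 ⟨Finset.dvd_lcm hd, (Finset.lcm_id_pos hD).ne'⟩

theorem exists_dvd_prod_cyclotomic_rat {k : ℕ} (hk : 0 < k) {p q : ℚ[X]}
    (hpk : p ∣ X ^ k - 1) (hpq : p ∣ q) :
    ∃ D ⊆ k.divisors, (∀ d ∈ D, cyclotomic d ℚ ∣ q) ∧ p ∣ ∏ d ∈ D, cyclotomic d ℚ := by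
  classical
  refine ⟨k.divisors.filter (cyclotomic · ℚ ∣ q), Finset.filter_subset _ _,
    fun d hd ↦ (Finset.mem_filter.1 hd).2, ?_⟩
  have hcop : IsCoprime p (∏ d ∈ k.divisors.filter (¬cyclotomic · ℚ ∣ q), cyclotomic d ℚ) := by
    refine IsCoprime.prod_right fun d hd ↦ ?_
    obtain ⟨hdk, hdq⟩ := Finset.mem_filter.1 hd
    have hirr := cyclotomic.irreducible_rat (Nat.pos_of_mem_divisors hdk)
    exact (hirr.coprime_iff_not_dvd.2 fun hdp ↦ hdq (hdp.trans hpq)).symm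
  refine hcop.dvd_of_dvd_mul_right ?_
  rwa [Finset.prod_filter_mul_prod_filter_not, prod_cyclotomic_eq_X_pow_sub_one hk]

end Polynomial

theorem Matrix.exists_sum_totient_le_card_and_orderOf_dvd_lcm {ι : Type*} [Fintype ι]
    [DecidableEq ι] {A : Matrix ι ι ℚ} (hA : IsOfFinOrder A) :
    ∃ D : Finset ℕ, 0 ∉ D ∧ ∑ d ∈ D, φ d ≤ Fintype.card ι ∧ orderOf A ∣ D.lcm id := by
  have hmin : minpoly ℚ A ∣ X ^ orderOf A - 1 :=
    minpoly.dvd ℚ A (by simp [pow_orderOf_eq_one])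
  obtain ⟨D, hDk, hDchar, hminD⟩ :=
    exists_dvd_prod_cyclotomic_rat hA.orderOf_pos hmin A.minpoly_dvd_charpoly
  have hD0 : 0 ∉ D := fun h ↦ (Nat.pos_of_mem_divisors (hDk h)).ne rfl
  refine ⟨D, hD0, ?_, ?_⟩
  · have := natDegree_le_of_dvd (prod_cyclotomic_rat_dvd hDchar) A.charpoly_monic.ne_zero
    rw [natDegree_prod _ _ fun d _ ↦ cyclotomic_ne_zero d ℚ, charpoly_natDegree_eq_dim] at this
    simpa only [natDegree_cyclotomic] using this
  · refine orderOf_dvd_of_pow_eq_one ?_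
    have := minpoly.dvd_iff.1 (hminD.trans (prod_cyclotomic_rat_dvd_X_pow_sub_one hD0))
    simpa [sub_eq_zero] using this

theorem Nat.Prime.pow_le_two_mul_totient {p : ℕ} (hp : p.Prime) (k : ℕ) :
    p ^ k ≤ 2 * φ (p ^ k) := by
  cases k with
  | zero => simp
  | succ k =>
    rw [totient_prime_pow_succ hp, pow_succ]
    calc p ^ k * p ≤ p ^ k * (2 * (p - 1)) := Nat.mul_le_mul_left _ (by have := hp.two_le; omega)
      _ = 2 * (p ^ k * (p - 1)) := by ring

theorem Nat.dvd_2520_of_totient_le_six {d : ℕ} (hd : d ≠ 0) (h : φ d ≤ 6) : d ∣ 2520 := by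
  refine (Nat.dvd_iff_prime_pow_dvd_dvd 2520 d).2 fun p k hp hpk ↦ ?_
  have hφ : φ (p ^ k) ≤ 6 :=
    (Nat.le_of_dvd (totient_pos.2 (Nat.pos_of_ne_zero hd)) (totient_dvd_of_dvd hpk)).trans h
  have hle : p ^ k ≤ 12 := by have := hp.pow_le_two_mul_totient k; omega
  exact (by decide : ∀ q ∈ Finset.Icc 1 12, φ q ≤ 6 → q ∣ 2520) _
    (Finset.mem_Icc.2 ⟨pow_pos hp.pos k, hle⟩) hφ

theorem Nat.totient_lcm_two (d : ℕ) : φ (Nat.lcm 2 d) = φ d := by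
  rcases Nat.even_or_odd d with ⟨m, rfl⟩ | hodd
  · rw [Nat.lcm_eq_right (by omega)]
  · rw [(Nat.coprime_two_left.2 hodd).lcm_eq_mul, totient_mul (Nat.coprime_two_left.2 hodd),
      totient_two, one_mul]

set_option maxRecDepth 10000 in
theorem Nat.lcm_two_mem_of_totient_le_six {d : ℕ} (hd : d ≠ 0) (h : φ d ≤ 6) :
    Nat.lcm 2 d ∈ ({2, 4, 6, 8, 10, 12, 14, 18} : Finset ℕ) :=
  (by decide : ∀ d ∈ (2520 : ℕ).divisors, φ d ≤ 6 →
    Nat.lcm 2 d ∈ ({2, 4, 6, 8, 10, 12, 14, 18} : Finset ℕ)) d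
    (Nat.mem_divisors.2 ⟨dvd_2520_of_totient_le_six hd h, by norm_num⟩) h

set_option maxRecDepth 10000 in
/-- Replacing each `d ∈ D` by `lcm 2 d` keeps `φ d` and can only enlarge the lcm, which leaves
only subsets of eight even candidates to check. -/
theorem Finset.lcm_le_thirty_of_sum_totient_le_six {D : Finset ℕ} (hD : 0 ∉ D)
    (h : ∑ d ∈ D, φ d ≤ 6) : D.lcm id ≤ 30 := by
  set E := D.image (Nat.lcm 2)
  have hE : ∑ e ∈ E, φ e ≤ 6 := calc
    ∑ e ∈ E, φ e ≤ ∑ d ∈ D, φ (Nat.lcm 2 d) :=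
        Finset.sum_image_le_of_nonneg fun _ _ ↦ Nat.zero_le _
    _ = ∑ d ∈ D, φ d := by simp only [totient_lcm_two]
    _ ≤ 6 := h
  have hEsub : E ⊆ {2, 4, 6, 8, 10, 12, 14, 18} :=
    Finset.image_subset_iff.2 fun d hd ↦ lcm_two_mem_of_totient_le_six
      (ne_of_mem_of_not_mem hd hD) ((Finset.single_le_sum (fun _ _ ↦ Nat.zero_le _) hd).trans h)
  have hDE : D.lcm id ∣ E.lcm id := Finset.lcm_dvd fun d hd ↦
    (Nat.dvd_lcm_right 2 d).trans (Finset.dvd_lcm (Finset.mem_image_of_mem _ hd))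
  have hE0 : 0 ∉ E := fun h0 ↦ by simpa using hEsub h0
  calc D.lcm id ≤ E.lcm id := Nat.le_of_dvd (Finset.lcm_id_pos hE0) hDE
    _ ≤ 30 := (by decide : ∀ E ∈ ({2, 4, 6, 8, 10, 12, 14, 18} : Finset ℕ).powerset,
        ∑ e ∈ E, φ e ≤ 6 → E.lcm id ≤ 30) E (Finset.mem_powerset.2 hEsub) hE

/-- A finite-order element of `GL_n(ℤ)` with `n ≤ 6` has order at most `30`. -/
theorem finite_order_GL6_int_order_le_30
    (n : ℕ) (hn : n ≤ 6) (T : Matrix.GeneralLinearGroup (Fin n) ℤ)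
    (hT : IsOfFinOrder T) :
    orderOf T ≤ 30 := by
  set A := (Int.castRingHom ℚ).mapMatrix (T : Matrix (Fin n) (Fin n) ℤ)
  have hTA : orderOf T = orderOf A := by
    rw [← orderOf_units, ← orderOf_injective (Int.castRingHom ℚ).mapMatrix.toMonoidHom
      (Matrix.map_injective Int.cast_injective)]
    rfl
  have hA : IsOfFinOrder A := orderOf_pos_iff.1 (hTA ▸ hT.orderOf_pos)
  obtain ⟨D, hD0, hDsum, hAD⟩ := Matrix.exists_sum_totient_le_card_and_orderOf_dvd_lcm hA
  rw [Fintype.card_fin] at hDsum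
  rw [hTA]
  calc orderOf A ≤ D.lcm id := Nat.le_of_dvd (Finset.lcm_id_pos hD0) hAD
    _ ≤ 30 := Finset.lcm_le_thirty_of_sum_totient_le_six hD0 (hDsum.trans hn)
end

section
/- Let d_1, ..., d_k be positive integers such that the sum of the Euler totients φ(d_1) + ... + φ(d_k) is at most 6. Then lcm(d_1, ..., d_k) ≤ 30. -/
/-!
From `n ≤ 2 φ(n)²` (an odd prime power `p^k` already satisfies `p^k ≤ φ(p^k)²`, and the prime `2`
costs the factor `2`), `φ(d) ≤ 6` forces `d ≤ 72`, leaving thirteen possible values of `d`.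
Those with `φ(d) ≤ 2` divide `12`. Since `φ(d)` is even for `d > 2`, any other `d_i` has
`φ(d_i) ≥ 4`, so there is at most one of them and the remaining `d_j` are divisors of `12` of
total totient at most `2`; a finite check finishes.
-/

open Finset
open scoped Nat

namespace Nat

theorem pow_le_totient_sq_of_odd_prime {p : ℕ} (hp : p.Prime) (hp2 : p ≠ 2) (k : ℕ) :
    p ^ k ≤ φ (p ^ k) ^ 2 := by
  cases k with
  | zero => simp
  | succ k =>
    have hp3 : 3 ≤ p := hp.two_le.lt_of_ne' hp2
    have hsq : p ≤ (p - 1) ^ 2 := by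
      obtain ⟨q, rfl⟩ := Nat.exists_eq_add_of_le hp3
      rw [show 3 + q - 1 = q + 2 by omega]
      nlinarith
    rw [totient_prime_pow_succ hp, pow_succ, mul_pow]
    exact Nat.mul_le_mul (Nat.le_self_pow two_ne_zero _) hsq

theorem le_totient_sq_of_odd {n : ℕ} (hn : Odd n) : n ≤ φ n ^ 2 := by
  induction n using Nat.recOnPosPrimePosCoprime with
  | prime_pow p k hp hk =>
    refine pow_le_totient_sq_of_odd_prime hp ?_ k
    rintro rfl
    exact Nat.not_even_iff_odd.2 hn (even_two.pow_of_ne_zero hk.ne')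
  | zero => simp
  | one => simp
  | coprime a b _ _ hab iha ihb =>
    obtain ⟨ha, hb⟩ := Nat.odd_mul.1 hn
    rw [totient_mul hab, mul_pow]
    exact Nat.mul_le_mul (iha ha) (ihb hb)

theorem two_pow_le_two_mul_totient_sq (k : ℕ) : 2 ^ k ≤ 2 * φ (2 ^ k) ^ 2 := by
  cases k with
  | zero => simp
  | succ k =>
    rw [totient_prime_pow_succ prime_two, pow_succ, mul_comm _ 2]
    simp only [Nat.add_one_sub_one, mul_one, ← pow_mul]
    exact Nat.mul_le_mul_left 2 (Nat.pow_le_pow_right two_pos (by omega))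

theorem le_two_mul_totient_sq (n : ℕ) : n ≤ 2 * φ n ^ 2 := by
  rcases eq_or_ne n 0 with rfl | hn
  · simp
  obtain ⟨k, m, hm, rfl⟩ := exists_eq_two_pow_mul_odd hn
  have hcop : Coprime (2 ^ k) m := (Nat.coprime_two_left.2 hm).pow_left k
  rw [totient_mul hcop, mul_pow, ← mul_assoc]
  exact Nat.mul_le_mul (two_pow_le_two_mul_totient_sq k) (le_totient_sq_of_odd hm)

theorem totient_le_six_iff {n : ℕ} (hn : 0 < n) :
    φ n ≤ 6 ↔ n ∈ ({1, 2, 3, 4, 5, 6, 7, 8, 9, 10, 12, 14, 18} : Finset ℕ) := by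
  constructor
  · intro h
    have h72 : n < 73 := by nlinarith [le_two_mul_totient_sq n]
    have : ∀ m < 73, 0 < m → φ m ≤ 6 →
        m ∈ ({1, 2, 3, 4, 5, 6, 7, 8, 9, 10, 12, 14, 18} : Finset ℕ) := by
      decide
    exact this n h72 hn h
  · have : ∀ m ∈ ({1, 2, 3, 4, 5, 6, 7, 8, 9, 10, 12, 14, 18} : Finset ℕ), φ m ≤ 6 := by
      decide
    exact this n

theorem dvd_twelve_of_totient_le_two {n : ℕ} (hn : 0 < n) (h : φ n ≤ 2) : n ∣ 12 := by
  have hmem := (totient_le_six_iff hn).1 (by omega)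
  have : ∀ m ∈ ({1, 2, 3, 4, 5, 6, 7, 8, 9, 10, 12, 14, 18} : Finset ℕ), φ m ≤ 2 → m ∣ 12 := by
    decide
  exact this n hmem h

theorem four_le_totient_of_two_lt {n : ℕ} (h : 2 < φ n) : 4 ≤ φ n := by
  obtain ⟨m, hm⟩ := totient_even (h.trans_le (totient_le n))
  omega

theorem lcm_le_thirty_of_totient_add_sum_totient_le_six :
    ∀ t ∈ ({1, 2, 3, 4, 5, 6, 7, 8, 9, 10, 12, 14, 18} : Finset ℕ),
      ∀ R ∈ (divisors 12).powerset, φ t + ∑ r ∈ R, φ r ≤ 6 → lcm t (R.lcm id) ≤ 30 := by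
  decide

theorem lcm_id_le_thirty_of_sum_totient_le_six {T : Finset ℕ} (hT : ∀ t ∈ T, 0 < t)
    (hsum : ∑ t ∈ T, φ t ≤ 6) : T.lcm id ≤ 30 := by
  classical
  by_cases hsmall : ∀ t ∈ T, φ t ≤ 2
  · have hdvd : T.lcm id ∣ 12 :=
      Finset.lcm_dvd fun t ht ↦ dvd_twelve_of_totient_le_two (hT t ht) (hsmall t ht)
    exact (Nat.le_of_dvd (by norm_num) hdvd).trans (by norm_num)
  simp only [not_forall, not_le] at hsmall
  obtain ⟨t, ht, ht2⟩ := hsmall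
  have ht4 := four_le_totient_of_two_lt ht2
  have hsplit : φ t + ∑ r ∈ T.erase t, φ r ≤ 6 := by rwa [add_sum_erase T _ ht]
  have hrest : T.erase t ⊆ divisors 12 := fun r hr ↦ by
    have hr_le : φ r ≤ ∑ r ∈ T.erase t, φ r := single_le_sum (fun _ _ ↦ Nat.zero_le _) hr
    exact mem_divisors.2
      ⟨dvd_twelve_of_totient_le_two (hT r (mem_of_mem_erase hr)) (by omega), by norm_num⟩
  have htmem := (totient_le_six_iff (hT t ht)).1 (by omega)
  rw [← insert_erase ht, lcm_insert]
  exact lcm_le_thirty_of_totient_add_sum_totient_le_six t htmem _ (mem_powerset.2 hrest) hsplit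

end Nat

/-- If positive integers `d 1, …, d k` satisfy `∑ φ(d i) ≤ 6`, then
their least common multiple is at most `30`. -/
theorem lcm_le_30_of_totient_sum_le_six
    (k : ℕ) (d : Fin k → ℕ) (hd : ∀ i, 0 < d i)
    (h : ∑ i, Nat.totient (d i) ≤ 6) :
    Finset.univ.lcm d ≤ 30 := by
  classical
  rw [lcm_eq_lcm_image]
  refine Nat.lcm_id_le_thirty_of_sum_totient_le_six ?_
    ((sum_image_le_of_nonneg fun _ _ ↦ Nat.zero_le _).trans h)
  simpa using hd
end
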